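/- Let m > 0 and q ∈ ℝ³. The cut-off integrals of the commutative second-order integrand diverge logarithmically: there exist constants 0 < c ≤ C and Λ₀ ≥ 2 (depending on m and q) such that for all Λ ≥ Λ₀, c · log Λ ≤ ∫_{‖p‖ ≤ Λ} f_q(p) dp ≤ C · log Λ. -/

import Mathlib

/-!
Write `A = ω(p)`, `B = ω(p + q)`, `Q = ω(q)`. Since `ω` is 1-Lipschitz and bounded below by `m`,
`A` and `B` agree up to the factor `1 + ‖q‖/m`. By Minkowski's inequality in `ℝ²`,
`A + B ≥ √((‖p‖ + ‖p + q‖)² + 4m²) ≥ √(Q² + 3m²)`, so `(A + B)² - Q²` is comparable to `(A + B)²`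
and `f_q(p)` is comparable to `(‖p‖ + m)⁻³`. In polar coordinates the integral of the latter over
the ball of radius `Λ` is a multiple of `∫₀^Λ y²/(y + m)³ dy`, which lies between
`∫_{√Λ}^Λ dy/(8y) = (log Λ)/16` and `∫₀^Λ dy/(y + m) ≤ 3 log Λ`.
-/

open MeasureTheory

/-- Euclidean three-space. -/
abbrev R3 := EuclideanSpace ℝ (Fin 3)

/-- The one-particle energy `ω(p) = √(‖p‖² + m²)` for `p ∈ ℝ³`. -/
noncomputable def ω3 (m : ℝ) (p : R3) : ℝ := Real.sqrt (‖p‖ ^ 2 + m ^ 2)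

/-- Integrand of the second-order energy correction of the commutative
`φ³` theory. -/
noncomputable def fC (m : ℝ) (q p : R3) : ℝ :=
  1 / (8 * (2 * Real.pi) ^ 6) * (ω3 m p + ω3 m (p + q)) /
    (ω3 m p * ω3 m (p + q) * ω3 m q * ((ω3 m p + ω3 m (p + q)) ^ 2 - (ω3 m q) ^ 2))

open Set Metric Real

section Energy

variable {m : ℝ}

lemma ω3_sq (m : ℝ) (p : R3) : ω3 m p ^ 2 = ‖p‖ ^ 2 + m ^ 2 :=
  sq_sqrt (by positivity)

lemma ω3_nonneg (m : ℝ) (p : R3) : 0 ≤ ω3 m p := sqrt_nonneg _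

lemma ω3_pos (hm : m ≠ 0) (p : R3) : 0 < ω3 m p :=
  sqrt_pos.2 (by positivity)

lemma norm_le_ω3 (m : ℝ) (p : R3) : ‖p‖ ≤ ω3 m p :=
  le_sqrt_of_sq_le (by nlinarith)

lemma le_ω3 (m : ℝ) (p : R3) : m ≤ ω3 m p :=
  le_sqrt_of_sq_le (by nlinarith)

lemma ω3_le (hm : 0 ≤ m) (p : R3) : ω3 m p ≤ ‖p‖ + m :=
  sqrt_le_iff.2 ⟨by positivity, by nlinarith [norm_nonneg p]⟩

@[fun_prop]
lemma continuous_ω3 (m : ℝ) : Continuous (ω3 m) := by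
  unfold ω3; fun_prop

lemma ω3_add_le (m : ℝ) (p q : R3) : ω3 m (p + q) ≤ ω3 m p + ‖q‖ := by
  refine sqrt_le_iff.2 ⟨add_nonneg (ω3_nonneg m p) (norm_nonneg q), ?_⟩
  have := norm_add_le p q
  nlinarith [ω3_sq m p, norm_le_ω3 m p, norm_nonneg q, norm_nonneg (p + q)]

lemma norm_add_norm_sq_add_le (m : ℝ) (p p' : R3) :
    (‖p‖ + ‖p'‖) ^ 2 + (2 * m) ^ 2 ≤ (ω3 m p + ω3 m p') ^ 2 := by
  have hprod : ‖p‖ * ‖p'‖ + m ^ 2 ≤ ω3 m p * ω3 m p' := by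
    rw [ω3, ω3, ← sqrt_mul (by positivity)]
    exact le_sqrt_of_sq_le (by nlinarith [sq_nonneg (‖p‖ * m - ‖p'‖ * m)])
  nlinarith [ω3_sq m p, ω3_sq m p']

lemma ω3_sq_add_three_mul_sq_le (m : ℝ) (p q : R3) :
    ω3 m q ^ 2 + 3 * m ^ 2 ≤ (ω3 m p + ω3 m (p + q)) ^ 2 := by
  have hq : ‖q‖ ≤ ‖p‖ + ‖p + q‖ := by
    simpa [add_comm] using norm_sub_le (p + q) p
  nlinarith [norm_add_norm_sq_add_le m p (p + q), ω3_sq m q, norm_nonneg q]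

lemma mul_ω3_add_le (hm : 0 ≤ m) (p q : R3) : m * ω3 m (p + q) ≤ (m + ‖q‖) * ω3 m p := by
  nlinarith [ω3_add_le m p q, le_ω3 m p, norm_nonneg q]

lemma mul_ω3_le_add (hm : 0 ≤ m) (p q : R3) : m * ω3 m p ≤ (m + ‖q‖) * ω3 m (p + q) := by
  simpa using mul_ω3_add_le hm (p + q) (-q)

lemma sq_mul_ω3_prod_le (hm : 0 ≤ m) (p q : R3) :
    m ^ 2 * (ω3 m p * ω3 m (p + q) * ω3 m q * (ω3 m p + ω3 m (p + q))) ≤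
      (m + ‖q‖) * (2 * m + ‖q‖) * ω3 m q * (‖p‖ + m) ^ 3 := by
  have hB := mul_ω3_add_le hm p q
  have hA := ω3_le hm p
  have hA0 := ω3_nonneg m p
  have hB0 := ω3_nonneg m (p + q)
  have hQ0 := ω3_nonneg m q
  have hAB : m * (ω3 m p + ω3 m (p + q)) ≤ (2 * m + ‖q‖) * ω3 m p := by linarith
  calc m ^ 2 * (ω3 m p * ω3 m (p + q) * ω3 m q * (ω3 m p + ω3 m (p + q)))
      = ω3 m p * (m * ω3 m (p + q)) * ω3 m q * (m * (ω3 m p + ω3 m (p + q))) := by ring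
    _ ≤ ω3 m p * ((m + ‖q‖) * ω3 m p) * ω3 m q * ((2 * m + ‖q‖) * ω3 m p) := by
        gcongr
    _ = (m + ‖q‖) * (2 * m + ‖q‖) * ω3 m q * ω3 m p ^ 3 := by ring
    _ ≤ (m + ‖q‖) * (2 * m + ‖q‖) * ω3 m q * (‖p‖ + m) ^ 3 := by gcongr

lemma mul_ω3_mul_pow_le_ω3_prod (hm : 0 ≤ m) (p q : R3) :
    m * ω3 m q * (‖p‖ + m) ^ 3 ≤
      8 * (m + ‖q‖) * (ω3 m p * ω3 m (p + q) * ω3 m q * (ω3 m p + ω3 m (p + q))) := by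
  have hB := mul_ω3_le_add hm p q
  have hA0 := ω3_nonneg m p
  have hB0 := ω3_nonneg m (p + q)
  have hQ0 := ω3_nonneg m q
  have hA : ‖p‖ + m ≤ 2 * ω3 m p := by linarith [norm_le_ω3 m p, le_ω3 m p]
  calc m * ω3 m q * (‖p‖ + m) ^ 3 ≤ m * ω3 m q * (2 * ω3 m p) ^ 3 := by gcongr
    _ = 8 * ω3 m p * (m * ω3 m p) * ω3 m q * ω3 m p := by ring
    _ ≤ 8 * ω3 m p * ((m + ‖q‖) * ω3 m (p + q)) * ω3 m q * (ω3 m p + ω3 m (p + q)) := by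
        gcongr; linarith
    _ = _ := by ring

end Energy

section EnergyKernel

noncomputable def energyKernel (A B Q : ℝ) : ℝ := (A + B) / (A * B * Q * ((A + B) ^ 2 - Q ^ 2))

variable {A B Q : ℝ}

lemma inv_le_energyKernel (hA : 0 < A) (hB : 0 < B) (hQ : 0 < Q) (hQAB : Q < A + B) :
    (A * B * Q * (A + B))⁻¹ ≤ energyKernel A B Q := by
  have hD : 0 < (A + B) ^ 2 - Q ^ 2 := by nlinarith
  rw [energyKernel, inv_eq_one_div, div_le_div_iff₀ (by positivity) (by positivity)]
  have := mul_le_mul_of_nonneg_left (by nlinarith : (A + B) ^ 2 - Q ^ 2 ≤ (A + B) * (A + B))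
    (by positivity : 0 ≤ A * B * Q)
  linarith

lemma energyKernel_le {δ : ℝ} (hA : 0 < A) (hB : 0 < B) (hQ : 0 < Q) (hδ : 0 < δ)
    (h : Q ^ 2 + δ ≤ (A + B) ^ 2) :
    energyKernel A B Q ≤ (Q ^ 2 + δ) / δ * (A * B * Q * (A + B))⁻¹ := by
  have hD : 0 < (A + B) ^ 2 - Q ^ 2 := by linarith
  rw [energyKernel, ← div_eq_mul_inv, div_div, div_le_div_iff₀ (by positivity) (by positivity)]
  have := mul_le_mul_of_nonneg_left
    (by nlinarith : δ * (A + B) ^ 2 ≤ (Q ^ 2 + δ) * ((A + B) ^ 2 - Q ^ 2))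
    (by positivity : 0 ≤ A * B * Q)
  nlinarith

end EnergyKernel

section

variable {m : ℝ}

lemma fC_eq (m : ℝ) (q p : R3) :
    fC m q p = 1 / (8 * (2 * π) ^ 6) * energyKernel (ω3 m p) (ω3 m (p + q)) (ω3 m q) :=
  mul_div_assoc _ _ _

lemma ω3_lt_ω3_add_ω3 (hm : m ≠ 0) (p q : R3) : ω3 m q < ω3 m p + ω3 m (p + q) := by
  refine lt_of_pow_lt_pow_left₀ 2 (add_nonneg (ω3_nonneg m p) (ω3_nonneg m _)) ?_
  have := ω3_sq_add_three_mul_sq_le m p q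
  have : 0 < m ^ 2 := by positivity
  linarith

lemma continuous_fC (hm : m ≠ 0) (q : R3) : Continuous (fC m q) := by
  refine Continuous.div (by fun_prop) (by fun_prop) fun p ↦ ?_
  have hQAB := ω3_lt_ω3_add_ω3 hm p q
  have hQ := ω3_pos hm q
  have : 0 < (ω3 m p + ω3 m (p + q)) ^ 2 - ω3 m q ^ 2 := by nlinarith
  have := ω3_pos hm p
  have := ω3_pos hm (p + q)
  positivity

lemma exists_fC_comparable (hm : 0 < m) (q : R3) :
    ∃ c C : ℝ, 0 < c ∧ 0 < C ∧ ∀ p : R3,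
      c * ((‖p‖ + m) ^ 3)⁻¹ ≤ fC m q p ∧ fC m q p ≤ C * ((‖p‖ + m) ^ 3)⁻¹ := by
  set K : ℝ := 1 / (8 * (2 * π) ^ 6)
  set Q := ω3 m q
  have hQ : 0 < Q := ω3_pos hm.ne' q
  refine ⟨K * m ^ 2 / ((m + ‖q‖) * (2 * m + ‖q‖) * Q),
    K * ((Q ^ 2 + 3 * m ^ 2) / (3 * m ^ 2)) * (8 * (m + ‖q‖) / (m * Q)),
    by positivity, by positivity, fun p ↦ ?_⟩
  set A := ω3 m p
  set B := ω3 m (p + q)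
  have hA : 0 < A := ω3_pos hm.ne' p
  have hB : 0 < B := ω3_pos hm.ne' (p + q)
  have hP : 0 < A * B * Q * (A + B) := by positivity
  rw [fC_eq]
  constructor
  · calc K * m ^ 2 / ((m + ‖q‖) * (2 * m + ‖q‖) * Q) * ((‖p‖ + m) ^ 3)⁻¹
        = K * (m ^ 2 / ((m + ‖q‖) * (2 * m + ‖q‖) * Q * (‖p‖ + m) ^ 3)) := by
          rw [← div_eq_mul_inv, div_div, mul_div_assoc]
      _ ≤ K * (A * B * Q * (A + B))⁻¹ := by
          gcongr
          rw [inv_eq_one_div, div_le_div_iff₀ (by positivity) hP]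
          linarith [sq_mul_ω3_prod_le hm.le p q]
      _ ≤ K * energyKernel A B Q := by
          gcongr
          exact inv_le_energyKernel hA hB hQ (ω3_lt_ω3_add_ω3 hm.ne' p q)
  · calc K * energyKernel A B Q
        ≤ K * ((Q ^ 2 + 3 * m ^ 2) / (3 * m ^ 2) * (A * B * Q * (A + B))⁻¹) := by
          gcongr
          exact energyKernel_le hA hB hQ (by positivity) (ω3_sq_add_three_mul_sq_le m p q)
      _ ≤ K * ((Q ^ 2 + 3 * m ^ 2) / (3 * m ^ 2) * (8 * (m + ‖q‖) / (m * Q * (‖p‖ + m) ^ 3))) := by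
          gcongr
          rw [inv_eq_one_div, div_le_div_iff₀ hP (by positivity)]
          linarith [mul_ω3_mul_pow_le_ω3_prod hm.le p q]
      _ = _ := by simp only [div_eq_mul_inv, mul_inv]; ring

end

section RadialIntegral

variable {E F : Type*} [NormedAddCommGroup E] [NormedSpace ℝ E] [FiniteDimensional ℝ E]
  [Nontrivial E] [MeasurableSpace E] [BorelSpace E] (μ : Measure E) [μ.IsAddHaarMeasure]
  [NormedAddCommGroup F] [NormedSpace ℝ F]

lemma setIntegral_closedBall_fun_norm_addHaar (f : ℝ → F) (r : ℝ) :
    ∫ x in closedBall (0 : E) r, f ‖x‖ ∂μ = Module.finrank ℝ E • μ.real (ball 0 1) •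
      ∫ y in Ioc 0 r, y ^ (Module.finrank ℝ E - 1) • f y := by
  have hind : (closedBall (0 : E) r).indicator (fun x ↦ f ‖x‖) =
      fun x ↦ (Iic r).indicator f ‖x‖ := by
    ext x
    simp [indicator]
  rw [← integral_indicator measurableSet_closedBall, hind, integral_fun_norm_addHaar,
    ← Ioi_inter_Iic, ← setIntegral_indicator measurableSet_Iic]
  simp_rw [indicator_smul]

end RadialIntegral

section

variable {m : ℝ}

lemma intervalIntegrable_sq_div_add_cube (hm : 0 < m) {a b : ℝ} (ha : 0 ≤ a) (hb : 0 ≤ b) :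
    IntervalIntegrable (fun y ↦ y ^ 2 / (y + m) ^ 3) volume a b := by
  apply ContinuousOn.intervalIntegrable
  apply ContinuousOn.div (by fun_prop) (by fun_prop)
  intro y hy
  have : 0 ≤ y := le_trans (le_min ha hb) hy.1
  positivity

lemma integral_sq_div_add_cube_le_log (hm : 0 < m) {Λ : ℝ} (hΛ : 0 ≤ Λ) :
    ∫ y in 0..Λ, y ^ 2 / (y + m) ^ 3 ≤ log ((Λ + m) / m) := by
  calc ∫ y in 0..Λ, y ^ 2 / (y + m) ^ 3 ≤ ∫ y in 0..Λ, (y + m)⁻¹ := by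
        refine intervalIntegral.integral_mono_on hΛ
          (intervalIntegrable_sq_div_add_cube hm le_rfl hΛ) ?_ fun y hy ↦ ?_
        · refine ContinuousOn.intervalIntegrable (ContinuousOn.inv₀ (by fun_prop) fun y hy ↦ ?_)
          rw [uIcc_of_le hΛ] at hy
          have : 0 ≤ y := hy.1
          positivity
        · have hy0 : 0 ≤ y := hy.1
          rw [div_le_iff₀ (by positivity), inv_mul_eq_div, le_div_iff₀ (by positivity)]
          have := mul_nonneg (mul_nonneg (by positivity : 0 ≤ y + m) hm.le)
            (by positivity : 0 ≤ 2 * y + m)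
          nlinarith
    _ = log ((Λ + m) / m) := by
        rw [intervalIntegral.integral_comp_add_right (fun y ↦ y⁻¹), zero_add,
          integral_inv_of_pos hm (by positivity)]

lemma log_div_le_integral_sq_div_add_cube (hm : 0 < m) {r Λ : ℝ} (hmr : m ≤ r) (hrΛ : r ≤ Λ) :
    log (Λ / r) / 8 ≤ ∫ y in 0..Λ, y ^ 2 / (y + m) ^ 3 := by
  have hr : 0 < r := hm.trans_le hmr
  have hΛ : 0 < Λ := hr.trans_le hrΛ
  calc log (Λ / r) / 8 = ∫ y in r..Λ, 8⁻¹ * y⁻¹ := by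
        rw [intervalIntegral.integral_const_mul, integral_inv_of_pos hr hΛ]; ring
    _ ≤ ∫ y in r..Λ, y ^ 2 / (y + m) ^ 3 := by
        refine intervalIntegral.integral_mono_on hrΛ ?_
          (intervalIntegrable_sq_div_add_cube hm hr.le hΛ.le) fun y hy ↦ ?_
        · refine (ContinuousOn.inv₀ (by fun_prop) fun y hy ↦ ?_).intervalIntegrable.const_mul _
          rw [uIcc_of_le hrΛ] at hy
          linarith [hy.1]
        · have hy0 : 0 < y := hr.trans_le hy.1
          calc 8⁻¹ * y⁻¹ = y ^ 2 / (2 * y) ^ 3 := by field_simp; ring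
            _ ≤ y ^ 2 / (y + m) ^ 3 := by gcongr; linarith [hy.1]
    _ ≤ ∫ y in 0..Λ, y ^ 2 / (y + m) ^ 3 := by
        rw [← intervalIntegral.integral_add_adjacent_intervals
          (intervalIntegrable_sq_div_add_cube hm le_rfl hr.le)
          (intervalIntegrable_sq_div_add_cube hm hr.le hΛ.le)]
        have := intervalIntegral.integral_nonneg (μ := volume) hr.le fun y (hy : y ∈ Icc 0 r) ↦
          (by have := hy.1; positivity : 0 ≤ y ^ 2 / (y + m) ^ 3)
        linarith

lemma log_div_sixteen_le_integral_sq_div_add_cube (hm : 0 < m) {Λ : ℝ} (hΛ : 1 ≤ Λ)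
    (hmΛ : m ^ 2 ≤ Λ) : log Λ / 16 ≤ ∫ y in 0..Λ, y ^ 2 / (y + m) ^ 3 := by
  have hsqrt : Λ / √Λ = √Λ := div_sqrt
  calc log Λ / 16 = log (Λ / √Λ) / 8 := by rw [hsqrt, log_sqrt (by positivity)]; ring
    _ ≤ _ := log_div_le_integral_sq_div_add_cube hm (le_sqrt_of_sq_le hmΛ)
        (sqrt_le_self_iff.2 (Or.inr hΛ))

lemma integral_sq_div_add_cube_le_three_mul_log (hm : 0 < m) {Λ : ℝ} (hΛ : 2 ≤ Λ)
    (hmΛ : 1 ≤ m * Λ) : ∫ y in 0..Λ, y ^ 2 / (y + m) ^ 3 ≤ 3 * log Λ := by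
  calc ∫ y in 0..Λ, y ^ 2 / (y + m) ^ 3 ≤ log ((Λ + m) / m) :=
        integral_sq_div_add_cube_le_log hm (by positivity)
    _ ≤ log (Λ ^ 3) := by
        gcongr
        rw [div_le_iff₀ hm]
        have h8 : (2 : ℝ) ^ 3 ≤ Λ ^ 3 := by gcongr
        nlinarith [mul_le_mul_of_nonneg_left hmΛ (by positivity : 0 ≤ Λ ^ 2),
          mul_le_mul_of_nonneg_right h8 hm.le]
    _ = 3 * log Λ := by rw [log_pow]; norm_num

end

lemma integral_closedBall_inv_norm_add_cube (m : ℝ) {Λ : ℝ} (hΛ : 0 ≤ Λ) :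
    ∫ p in closedBall (0 : R3) Λ, ((‖p‖ + m) ^ 3)⁻¹ =
      3 * volume.real (ball (0 : R3) 1) * ∫ y in 0..Λ, y ^ 2 / (y + m) ^ 3 := by
  rw [setIntegral_closedBall_fun_norm_addHaar volume (fun y ↦ ((y + m) ^ 3)⁻¹),
    finrank_euclideanSpace_fin, intervalIntegral.integral_of_le hΛ]
  simp [div_eq_mul_inv, mul_assoc]

lemma integral_closedBall_inv_norm_add_cube_log_bounds {m : ℝ} (hm : 0 < m) {Λ : ℝ}
    (hΛ : max 2 (max (m ^ 2) m⁻¹) ≤ Λ) :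
    3 * volume.real (ball (0 : R3) 1) / 16 * log Λ ≤
        ∫ p in closedBall (0 : R3) Λ, ((‖p‖ + m) ^ 3)⁻¹ ∧
      ∫ p in closedBall (0 : R3) Λ, ((‖p‖ + m) ^ 3)⁻¹ ≤
        9 * volume.real (ball (0 : R3) 1) * log Λ := by
  simp only [max_le_iff] at hΛ
  obtain ⟨hΛ2, hmΛ, hm'Λ⟩ := hΛ
  have hV : 0 ≤ volume.real (ball (0 : R3) 1) := measureReal_nonneg
  rw [integral_closedBall_inv_norm_add_cube m (by linarith)]
  constructor
  · have := log_div_sixteen_le_integral_sq_div_add_cube hm (by linarith) hmΛ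
    nlinarith
  · have := integral_sq_div_add_cube_le_three_mul_log hm hΛ2 ((inv_le_iff_one_le_mul₀' hm).1 hm'Λ)
    nlinarith

lemma exists_setIntegral_fC_comparable {m : ℝ} (hm : 0 < m) (q : R3) :
    ∃ c C : ℝ, 0 < c ∧ 0 < C ∧ ∀ Λ : ℝ,
      c * ∫ p in closedBall (0 : R3) Λ, ((‖p‖ + m) ^ 3)⁻¹ ≤
          ∫ p in closedBall (0 : R3) Λ, fC m q p ∧
        ∫ p in closedBall (0 : R3) Λ, fC m q p ≤
          C * ∫ p in closedBall (0 : R3) Λ, ((‖p‖ + m) ^ 3)⁻¹ := by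
  obtain ⟨c, C, hc, hC, hfC⟩ := exists_fC_comparable hm q
  refine ⟨c, C, hc, hC, fun Λ ↦ ?_⟩
  have hw : Continuous fun p : R3 ↦ ((‖p‖ + m) ^ 3)⁻¹ :=
    Continuous.inv₀ (by fun_prop) fun p ↦ by positivity
  have hint : ∀ {f : R3 → ℝ}, Continuous f → IntegrableOn f (closedBall 0 Λ) :=
    fun hf ↦ hf.continuousOn.integrableOn_compact (isCompact_closedBall _ _)
  rw [← integral_const_mul, ← integral_const_mul]
  exact ⟨setIntegral_mono_on ((hint hw).const_mul c) (hint (continuous_fC hm.ne' q))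
      measurableSet_closedBall fun p _ ↦ (hfC p).1,
    setIntegral_mono_on (hint (continuous_fC hm.ne' q)) ((hint hw).const_mul C)
      measurableSet_closedBall fun p _ ↦ (hfC p).2⟩

theorem stmt14 (m : ℝ) (hm : 0 < m) (q : R3) :
    ∃ c C Λ₀ : ℝ, 0 < c ∧ c ≤ C ∧ 2 ≤ Λ₀ ∧
      ∀ Λ : ℝ, Λ₀ ≤ Λ →
        c * Real.log Λ ≤ ∫ p in Metric.closedBall (0 : R3) Λ, fC m q p ∧
        (∫ p in Metric.closedBall (0 : R3) Λ, fC m q p) ≤ C * Real.log Λ := by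
  obtain ⟨c₀, C₀, hc₀, hC₀, hfC⟩ := exists_setIntegral_fC_comparable hm q
  set V := volume.real (ball (0 : R3) 1)
  have hV : 0 < V :=
    ENNReal.toReal_pos (measure_ball_pos volume _ one_pos).ne' measure_ball_lt_top.ne
  refine ⟨c₀ * (3 * V / 16), max (c₀ * (3 * V / 16)) (C₀ * (9 * V)),
    max 2 (max (m ^ 2) m⁻¹), by positivity, le_max_left _ _, le_max_left _ _, fun Λ hΛ ↦ ?_⟩
  obtain ⟨hwlow, hwup⟩ := integral_closedBall_inv_norm_add_cube_log_bounds hm hΛ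
  have hlog : 0 ≤ log Λ := log_nonneg (by linarith [le_max_left 2 (max (m ^ 2) m⁻¹)])
  constructor
  · calc c₀ * (3 * V / 16) * log Λ = c₀ * (3 * V / 16 * log Λ) := mul_assoc _ _ _
      _ ≤ c₀ * ∫ p in closedBall (0 : R3) Λ, ((‖p‖ + m) ^ 3)⁻¹ := by gcongr
      _ ≤ ∫ p in closedBall (0 : R3) Λ, fC m q p := (hfC Λ).1
  · calc ∫ p in closedBall (0 : R3) Λ, fC m q p
        ≤ C₀ * ∫ p in closedBall (0 : R3) Λ, ((‖p‖ + m) ^ 3)⁻¹ := (hfC Λ).2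
      _ ≤ C₀ * (9 * V * log Λ) := by gcongr
      _ ≤ max (c₀ * (3 * V / 16)) (C₀ * (9 * V)) * log Λ := by
          rw [← mul_assoc]
          gcongr
          exact le_max_right _ _
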